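/- The following identity holds in the ring ℤ⟦q⟧ of formal power series: ∑_{π ∈ D} (−1)^{⌈E⌉(π)} q^{O(π)} = ∏_{i≥0} (1 + q^{4i+1})(1 − q^{4i+3}), where the sum runs over all partitions into distinct parts; i.e., for every n ≥ 0, the signed count ∑_{π ∈ D, O(π)=n} (−1)^{⌈E⌉(π)} (a finite sum) equals the coefficient of q^n in (−q; q⁴)_∞ (q³; q⁴)_∞. -/

import Mathlib

/-- Sum of `f` over the entries of a list at even 0-based positions, i.e. over the
odd-indexed parts `λ1, λ3, λ5, …` of a partition `(λ1, λ2, λ3, …)`. -/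
def sumAlt (f : ℕ → ℕ) : List ℕ → ℕ
  | [] => 0
  | [a] => f a
  | a :: _ :: l => f a + sumAlt f l

/-- `O(π) = λ1 + λ3 + λ5 + ⋯`, the sum of the odd-indexed parts. -/
def Osum (l : List ℕ) : ℕ := sumAlt id l

/-- `E(π) = λ2 + λ4 + λ6 + ⋯`, the sum of the even-indexed parts. -/
def Esum (l : List ℕ) : ℕ := sumAlt id l.tail

/-- `γ(π) = λ1 − λ2 + λ3 − λ4 + ⋯ = O(π) − E(π)`, the alternating sum of the parts.
For a weakly decreasing list we have `Osum l ≥ Esum l`, so natural subtraction is exact. -/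
def gammaSum (l : List ℕ) : ℕ := Osum l - Esum l

/-- `⌈O⌉(π) = ∑ ⌈λ_{2i−1}/2⌉`. -/
def ceilO (l : List ℕ) : ℕ := sumAlt (fun a => (a + 1) / 2) l

/-- `⌊O⌋(π) = ∑ ⌊λ_{2i−1}/2⌋`. -/
def floorO (l : List ℕ) : ℕ := sumAlt (fun a => a / 2) l

/-- `⌈E⌉(π) = ∑ ⌈λ_{2i}/2⌉`. -/
def ceilE (l : List ℕ) : ℕ := sumAlt (fun a => (a + 1) / 2) l.tail

/-- `⌊E⌋(π) = ∑ ⌊λ_{2i}/2⌋`. -/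
def floorE (l : List ℕ) : ℕ := sumAlt (fun a => a / 2) l.tail

/-- A partition: a weakly decreasing finite list of positive integers. -/
def IsPartition (l : List ℕ) : Prop := l.Pairwise (· ≥ ·) ∧ ∀ x ∈ l, 0 < x

/-- A partition into distinct parts: a strictly decreasing finite list of positive integers. -/
def IsDistinctPartition (l : List ℕ) : Prop := l.Pairwise (· > ·) ∧ ∀ x ∈ l, 0 < x

/-- The Gaussian binomial coefficient `[n choose k]_q` as a polynomial in `q`
(defined by the q-Pascal recurrence; it equals `(q;q)_n / ((q;q)_k (q;q)_{n−k})`). -/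
noncomputable def qbinom : ℕ → ℕ → Polynomial ℤ
  | _, 0 => 1
  | 0, _ + 1 => 0
  | n + 1, k + 1 => qbinom n k + Polynomial.X ^ (k + 1) * qbinom n (k + 1)

/-!
Removing the largest part `B + 1` of a distinct partition turns its even-indexed parts into
odd-indexed ones and vice versa. Hence the signed generating functions
`gfOdd B = ∑ (−1)^{⌈E⌉} q^O` and `gfEven B = ∑ (−1)^{⌈O⌉} q^E` over distinct partitions with parts
`≤ B` satisfy `gfOdd (B+1) = gfOdd B + q^{B+1} gfEven B` and
`gfEven (B+1) = gfEven B + (−1)^{⌈(B+1)/2⌉} gfOdd B`. For odd `B` the contributions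
`(−1)^{⌈(B+1)/2⌉} gfOdd B` and `(−1)^{⌈(B+2)/2⌉} gfOdd B` to `gfEven (B+2)` cancel, so by induction
`gfEven B = 0` and `gfOdd (B+2) = (1 + (−1)^{(B+1)/2} q^{B+2}) gfOdd B` for all odd `B`.
The largest part of a distinct partition is at most `O`, so `gfOdd (4n+3)` already has the full
coefficient of `q^n`.
-/

open Finset PowerSeries

theorem Osum_cons (a : ℕ) (l : List ℕ) : Osum (a :: l) = a + Esum l := by
  cases l <;> simp [Osum, Esum, sumAlt]

theorem Esum_cons (a : ℕ) (l : List ℕ) : Esum (a :: l) = Osum l := rfl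

theorem ceilE_cons (a : ℕ) (l : List ℕ) : ceilE (a :: l) = ceilO l := rfl

theorem ceilO_cons (a : ℕ) (l : List ℕ) : ceilO (a :: l) = (a + 1) / 2 + ceilE l := by
  cases l <;> simp [ceilO, ceilE, sumAlt]

theorem le_Osum_of_mem {l : List ℕ} (hl : l.Pairwise (· ≥ ·)) {x : ℕ} (hx : x ∈ l) :
    x ≤ Osum l := by
  cases l with
  | nil => simp at hx
  | cons a l =>
    have hxa : x ≤ a := by
      rcases List.mem_cons.mp hx with rfl | hx
      · exact le_rfl
      · exact (List.pairwise_cons.mp hl).1 x hx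
    rw [Osum_cons]
    omega

theorem isDistinctPartition_sort {S : Finset ℕ} (hS : ∀ x ∈ S, 0 < x) :
    IsDistinctPartition (S.sort (· ≥ ·)) :=
  ⟨(sortedGT_sort S).pairwise, fun x hx => hS x ((mem_sort _).mp hx)⟩

theorem IsDistinctPartition.sort_toFinset {l : List ℕ} (hl : IsDistinctPartition l) :
    l.toFinset.sort (· ≥ ·) = l :=
  (List.toFinset_sort _ hl.1.sortedGT.nodup).mpr (hl.1.imp le_of_lt)

theorem setOf_isDistinctPartition_Osum_eq (n B : ℕ) (hB : n ≤ B) :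
    {l : List ℕ | IsDistinctPartition l ∧ Osum l = n} =
      ↑(((Icc 1 B).powerset.filter fun S => Osum (S.sort (· ≥ ·)) = n).image
        fun S => S.sort (· ≥ ·)) := by
  ext l
  simp only [Set.mem_ofPred_eq, coe_image, coe_filter, mem_powerset, Set.mem_image]
  constructor
  · rintro ⟨hl, rfl⟩
    refine ⟨l.toFinset, ⟨fun x hx => ?_, by rw [hl.sort_toFinset]⟩, hl.sort_toFinset⟩
    rw [List.mem_toFinset] at hx
    exact mem_Icc.mpr ⟨hl.2 x hx, (le_Osum_of_mem (hl.1.imp le_of_lt) hx).trans hB⟩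
  · rintro ⟨S, ⟨hSB, rfl⟩, rfl⟩
    exact ⟨isDistinctPartition_sort fun x hx => (mem_Icc.mp (hSB hx)).1, rfl⟩

theorem sum_powerset_Icc_one_add_one {M : Type*} [AddCommMonoid M] (f : List ℕ → M) (B : ℕ) :
    ∑ S ∈ (Icc 1 (B + 1)).powerset, f (S.sort (· ≥ ·)) =
      ∑ S ∈ (Icc 1 B).powerset, f (S.sort (· ≥ ·)) +
        ∑ S ∈ (Icc 1 B).powerset, f ((B + 1) :: S.sort (· ≥ ·)) := by
  have hB : B + 1 ∉ Icc 1 B := by simp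
  rw [← insert_Icc_right_eq_Icc_add_one (by omega), sum_powerset_insert hB]
  congr 1
  refine sum_congr rfl fun S hS => ?_
  rw [sort_insert _ (fun x hx => ?_) fun h => hB (mem_powerset.mp hS h)]
  have := mem_Icc.mp (mem_powerset.mp hS hx)
  omega

noncomputable def gfOdd (B : ℕ) : ℤ⟦X⟧ :=
  ∑ S ∈ (Icc 1 B).powerset, (-1) ^ ceilE (S.sort (· ≥ ·)) * X ^ Osum (S.sort (· ≥ ·))

noncomputable def gfEven (B : ℕ) : ℤ⟦X⟧ :=
  ∑ S ∈ (Icc 1 B).powerset, (-1) ^ ceilO (S.sort (· ≥ ·)) * X ^ Esum (S.sort (· ≥ ·))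

theorem gfOdd_zero : gfOdd 0 = 1 := by simp [gfOdd, ceilE, Osum, sumAlt]

theorem gfEven_zero : gfEven 0 = 1 := by simp [gfEven, ceilO, Esum, sumAlt]

theorem gfOdd_add_one (B : ℕ) : gfOdd (B + 1) = gfOdd B + X ^ (B + 1) * gfEven B := by
  unfold gfOdd gfEven
  rw [sum_powerset_Icc_one_add_one fun l => (-1) ^ ceilE l * X ^ Osum l, mul_sum]
  simp only [Osum_cons, ceilE_cons, pow_add]
  congr 1
  exact sum_congr rfl fun _ _ => by ring

theorem gfEven_add_one (B : ℕ) : gfEven (B + 1) = gfEven B + (-1) ^ ((B + 2) / 2) * gfOdd B := by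
  unfold gfOdd gfEven
  rw [sum_powerset_Icc_one_add_one fun l => (-1) ^ ceilO l * X ^ Esum l, mul_sum]
  simp only [Esum_cons, ceilO_cons, pow_add]
  congr 1
  exact sum_congr rfl fun _ _ => by ring

theorem gfOdd_gfEven_add_two {B : ℕ} (hB : Odd B) (h : gfEven B = 0) :
    gfOdd (B + 2) = (1 + (-1) ^ ((B + 1) / 2) * X ^ (B + 2)) * gfOdd B ∧ gfEven (B + 2) = 0 := by
  obtain ⟨m, rfl⟩ := hB
  have hOdd : gfOdd (2 * m + 2) = gfOdd (2 * m + 1) := by rw [gfOdd_add_one, h]; ring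
  have hEven : gfEven (2 * m + 2) = (-1) ^ (m + 1) * gfOdd (2 * m + 1) := by
    rw [gfEven_add_one, h, show (2 * m + 1 + 2) / 2 = m + 1 by omega]; ring
  rw [show (2 * m + 1 + 1) / 2 = m + 1 by omega]
  constructor
  · rw [gfOdd_add_one, hOdd, hEven]; ring
  · rw [gfEven_add_one, hOdd, hEven, show (2 * m + 2 + 2) / 2 = m + 1 + 1 by omega]; ring

theorem gfOdd_gfEven_four_mul_add_three (n : ℕ) :
    gfOdd (4 * n + 3) = ∏ i ∈ range (n + 1), (1 + X ^ (4 * i + 1)) * (1 - X ^ (4 * i + 3)) ∧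
      gfEven (4 * n + 3) = 0 := by
  induction n with
  | zero =>
    have hOdd : gfOdd 1 = 1 + X := by simpa [gfOdd_zero, gfEven_zero] using gfOdd_add_one 0
    have hEven : gfEven 1 = 0 := by simpa [gfOdd_zero, gfEven_zero] using gfEven_add_one 0
    obtain ⟨h3, h3'⟩ := gfOdd_gfEven_add_two odd_one hEven
    refine ⟨?_, h3'⟩
    rw [h3, hOdd, prod_range_one]
    ring
  | succ n ih =>
    obtain ⟨h5, h5'⟩ := gfOdd_gfEven_add_two ⟨2 * n + 1, by ring⟩ ih.2
    obtain ⟨h7, h7'⟩ := gfOdd_gfEven_add_two ⟨2 * n + 2, by ring⟩ h5'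
    rw [show 4 * (n + 1) + 3 = 4 * n + 3 + 2 + 2 by ring]
    refine ⟨?_, h7'⟩
    rw [h7, h5, ih.1, prod_range_succ _ (n + 1), show (4 * n + 3 + 1) / 2 = 2 * (n + 1) by omega,
      show (4 * n + 3 + 2 + 1) / 2 = 2 * (n + 1) + 1 by omega,
      (even_two_mul _).neg_one_pow, (odd_two_mul_add_one _).neg_one_pow]
    ring

theorem coeff_gfOdd (n B : ℕ) :
    coeff n (gfOdd B) = ∑ S ∈ (Icc 1 B).powerset with Osum (S.sort (· ≥ ·)) = n,
      (-1) ^ ceilE (S.sort (· ≥ ·)) := by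
  rw [gfOdd, map_sum, sum_filter]
  refine sum_congr rfl fun S _ => ?_
  rw [← map_one C, ← map_neg, ← map_pow, coeff_C_mul_X_pow]
  exact if_congr eq_comm rfl rfl

/-- `∑_{π ∈ D} (−1)^{⌈E⌉(π)} q^{O(π)} = (−q; q⁴)_∞ (q³; q⁴)_∞` in `ℤ⟦q⟧`: for every `n`,
the signed count over partitions into distinct parts with `O(π) = n` equals the coefficient
of `q^n` in `∏_{i≥0} (1 + q^{4i+1})(1 − q^{4i+3})` (truncating the product at `i ≤ n`
does not change this coefficient, since further factors only affect higher coefficients). -/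
theorem signed_ceilE_distinct (n : ℕ) :
    (∑ᶠ l ∈ {l : List ℕ | IsDistinctPartition l ∧ Osum l = n}, ((-1 : ℤ)) ^ ceilE l)
    = PowerSeries.coeff (R := ℤ) n (∏ i ∈ Finset.range (n + 1),
        (1 + PowerSeries.X ^ (4 * i + 1)) * (1 - PowerSeries.X ^ (4 * i + 3))) := by
  rw [setOf_isDistinctPartition_Osum_eq n (4 * n + 3) (by omega), finsum_mem_coe_finset,
    sum_image fun S _ S' _ h => by simpa using congrArg List.toFinset h, ← coeff_gfOdd,
    (gfOdd_gfEven_four_mul_add_three n).1]
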